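/- Let Γ be a finite directed multigraph. Then the set of bi-infinite paths of Γ is uncountable if and only if there exist a vertex v, a positive integer ℓ, and two distinct closed walks of length ℓ based at v. -/

import Mathlib

/-!
Two different closed walks of length `ℓ` at `v` can be concatenated in blocks of length `ℓ`
according to any sequence `ℤ → Bool`, which gives continuum many bi-infinite paths.

Conversely, suppose a closed walk is determined by its base vertex and its length. If a path `f`
visits one vertex at times `x < y < z`, then the closed walk `f[x, z)` equals its rotation
`f[y, z) ++ f[x, y)`, so `f` is invariant under the shift by `y - x` on `[x, z - (y - x))` and
under the shift by `z - y` on `[x, y)`. Some vertex is visited infinitely often in each direction,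
so every path is eventually periodic at both ends, and there are only countably many such
functions `ℤ → E`.
-/

/-- A finite directed multigraph: edges with source and target maps. -/
structure DirMultigraph (V E : Type*) where
  s : E → V
  t : E → V

/-- A bi-infinite path in a directed multigraph. -/
def DirMultigraph.IsBiInfinitePath {V E : Type*} (G : DirMultigraph V E) (f : ℤ → E) : Prop :=
  ∀ n : ℤ, G.t (f n) = G.s (f (n + 1))

/-- `w 0, w 1, …, w (ℓ-1)` is a closed walk of length `ℓ` based at the vertex `v`. -/
def DirMultigraph.IsClosedWalk {V E : Type*} (G : DirMultigraph V E) (v : V) (ℓ : ℕ)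
    (w : ℕ → E) : Prop :=
  G.s (w 0) = v ∧ G.t (w (ℓ - 1)) = v ∧ ∀ i : ℕ, i + 1 < ℓ → G.t (w i) = G.s (w (i + 1))

open Filter Set Function

section EventuallyPeriodic

variable {α : Type*} {f g : ℤ → α}

theorem Int.eqOn_Ici_of_add_eq {n a : ℤ} (ha : 0 < a) (hf : ∀ k ≥ n, f (k + a) = f k)
    (hg : ∀ k ≥ n, g (k + a) = g k) (h : EqOn f g (Ico n (n + a))) : EqOn f g (Ici n) := by
  suffices ∀ m ≥ n, EqOn f g (Ico m (m + a)) from fun k hk => this k hk ⟨le_rfl, by omega⟩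
  intro m hm
  induction m, hm using Int.leInduction with
  | base => exact h
  | succ m hm ih =>
    intro k ⟨hk₁, hk₂⟩
    rcases lt_or_eq_of_le (show k ≤ m + a by omega) with hk | rfl
    · exact ih ⟨by omega, hk⟩
    · rw [hf m hm, hg m hm]
      exact ih ⟨le_rfl, by omega⟩

theorem Int.eqOn_Iic_of_add_eq {m b : ℤ} (hb : 0 < b) (hf : ∀ k ≤ m, f (k + b) = f k)
    (hg : ∀ k ≤ m, g (k + b) = g k) (h : EqOn f g (Ioc (m - b) m)) : EqOn f g (Iic m) := by
  suffices ∀ n ≤ m, EqOn f g (Ioc (n - b) n) from fun k hk => this k hk ⟨by omega, le_rfl⟩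
  intro n hn
  induction n, hn using Int.leInductionDown with
  | base => exact h
  | pred n hn ih =>
    intro k ⟨hk₁, hk₂⟩
    rcases lt_or_eq_of_le (show n - b ≤ k by omega) with hk | rfl
    · exact ih ⟨hk, by omega⟩
    · rw [← hf (n - b) (by omega), ← hg (n - b) (by omega), sub_add_cancel]
      exact ih ⟨by omega, le_rfl⟩

theorem Int.eq_of_eqOn_Icc_of_add_eq {n m a b : ℤ} (ha : 0 < a) (hb : 0 < b) (hmn : m ≤ n)
    (hf₁ : ∀ k ≥ n, f (k + a) = f k) (hf₂ : ∀ k ≤ m, f (k + b) = f k)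
    (hg₁ : ∀ k ≥ n, g (k + a) = g k) (hg₂ : ∀ k ≤ m, g (k + b) = g k)
    (h : EqOn f g (Icc (m - b) (n + a))) : f = g := by
  funext k
  rcases le_or_gt n k with hk | hk
  · exact Int.eqOn_Ici_of_add_eq ha hf₁ hg₁ (h.mono (Ico_subset_Icc_self.trans
      (Icc_subset_Icc (by omega) le_rfl))) hk
  rcases le_or_gt k m with hk' | hk'
  · exact Int.eqOn_Iic_of_add_eq hb hf₂ hg₂ (h.mono (Ioc_subset_Icc_self.trans
      (Icc_subset_Icc le_rfl (by omega)))) hk'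
  · exact h ⟨by omega, by omega⟩

theorem Int.countable_setOf_eventually_add_eq [Finite α] :
    {f : ℤ → α | (∃ a > 0, ∀ᶠ k in atTop, f (k + a) = f k) ∧
      ∃ b > 0, ∀ᶠ k in atBot, f (k + b) = f k}.Countable := by
  have hfin : ∀ a b n m : ℤ, {f : ℤ → α | 0 < a ∧ 0 < b ∧ m ≤ n ∧
      (∀ k ≥ n, f (k + a) = f k) ∧ ∀ k ≤ m, f (k + b) = f k}.Finite := by
    intro a b n m
    refine Set.Finite.of_finite_image (f := fun f (k : Icc (m - b) (n + a)) => f k)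
      (Set.toFinite _) ?_
    rintro f ⟨ha, hb, hmn, hf₁, hf₂⟩ g ⟨-, -, -, hg₁, hg₂⟩ hfg
    exact Int.eq_of_eqOn_Icc_of_add_eq ha hb hmn hf₁ hf₂ hg₁ hg₂ fun k hk => congrFun hfg ⟨k, hk⟩
  refine (countable_iUnion fun t : ℤ × ℤ × ℤ × ℤ =>
    (hfin t.1 t.2.1 t.2.2.1 t.2.2.2).countable).mono ?_
  rintro f ⟨⟨a, ha, hfa⟩, b, hb, hfb⟩
  obtain ⟨n, hn⟩ := eventually_atTop.1 hfa
  obtain ⟨m, hm⟩ := eventually_atBot.1 hfb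
  exact mem_iUnion.2 ⟨(a, b, n, min m n), ha, hb, min_le_right _ _, hn,
    fun k hk => hm k (hk.trans (min_le_left _ _))⟩

end EventuallyPeriodic

section BlockConcat

variable {ι α : Type*}

def blockConcat (ℓ : ℕ) (W : ι → ℕ → α) (σ : ℤ → ι) : ℤ → α :=
  fun k => W (σ (k / ℓ)) (k % ℓ).toNat

theorem blockConcat_mul_add {ℓ i : ℕ} (W : ι → ℕ → α) (σ : ℤ → ι) (c : ℤ)
    (hi : i < ℓ) : blockConcat ℓ W σ (ℓ * c + i) = W (σ c) i := by
  have hi' : (i : ℤ) < ℓ := by exact_mod_cast hi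
  have hℓ : (ℓ : ℤ) ≠ 0 := by omega
  simp only [blockConcat, add_comm (ℓ * c : ℤ), Int.add_mul_ediv_left _ _ hℓ,
    Int.add_mul_emod_self_left, Int.emod_eq_of_lt (Int.natCast_nonneg i) hi',
    Int.ediv_eq_zero_of_lt (Int.natCast_nonneg i) hi', zero_add, Int.toNat_natCast]

theorem blockConcat_injective {ℓ : ℕ} {W : ι → ℕ → α}
    (hW : ∀ x y, (∀ i < ℓ, W x i = W y i) → x = y) : Injective (blockConcat ℓ W) := by
  intro σ τ h
  funext c
  refine hW _ _ fun i hi => ?_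
  simpa only [blockConcat_mul_add _ _ _ hi] using congrFun h (ℓ * c + i)

end BlockConcat

namespace DirMultigraph

variable {V E : Type*} {G : DirMultigraph V E}

variable (G) in
def ClosedWalksUnique : Prop :=
  ∀ (v : V) (ℓ : ℕ) (w₁ w₂ : ℕ → E), G.IsClosedWalk v ℓ w₁ → G.IsClosedWalk v ℓ w₂ →
    ∀ i < ℓ, w₁ i = w₂ i

theorem IsClosedWalk.append {v : V} {a b : ℕ} {u w : ℕ → E} (hu : G.IsClosedWalk v a u)
    (hw : G.IsClosedWalk v b w) (ha : 0 < a) (hb : 0 < b) :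
    G.IsClosedWalk v (a + b) (fun i => if i < a then u i else w (i - a)) := by
  refine ⟨by simpa [ha] using hu.1, ?_, fun i hi => ?_⟩
  · simpa [show ¬ a + b - 1 < a by omega, show a + b - 1 - a = b - 1 by omega] using hw.2.1
  · rcases lt_trichotomy (i + 1) a with h | h | h
    · simpa [h, show i < a by omega] using hu.2.2 i h
    · simp only [show i < a by omega, h, lt_irrefl, if_true, if_false, Nat.sub_self, hw.1]
      simpa [show i = a - 1 by omega] using hu.2.1
    · simp only [show ¬ i < a by omega, show ¬ i + 1 < a by omega, if_false,
        show i + 1 - a = i - a + 1 by omega]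
      exact hw.2.2 _ (by omega)

theorem IsBiInfinitePath.isClosedWalk {f : ℤ → E} (hf : G.IsBiInfinitePath f) {v : V} {x y : ℤ}
    (hxy : x < y) (hx : G.s (f x) = v) (hy : G.s (f y) = v) :
    G.IsClosedWalk v (y - x).toNat (fun i => f (x + i)) := by
  refine ⟨by simpa using hx, ?_, fun i _ => by simpa [add_assoc] using hf (x + i)⟩
  rw [hf, ← hy]
  congr 2
  omega

theorem IsBiInfinitePath.shift_eq (hG : G.ClosedWalksUnique) {f : ℤ → E}
    (hf : G.IsBiInfinitePath f) {v : V} {x y z : ℤ} (hxy : x < y) (hyz : y < z)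
    (hx : G.s (f x) = v) (hy : G.s (f y) = v) (hz : G.s (f z) = v) :
    (∀ k, x ≤ k → k + (y - x) < z → f (k + (y - x)) = f k) ∧
      ∀ k, x ≤ k → k < y → f (k + (z - y)) = f k := by
  have hlen : (z - y).toNat + (y - x).toNat = (z - x).toNat := by omega
  have hrot := hG _ _ _ _ (hf.isClosedWalk (hxy.trans hyz) hx hz)
    (hlen ▸ (hf.isClosedWalk hyz hy hz).append (hf.isClosedWalk hxy hx hy) (by omega) (by omega))
  constructor
  · intro k hxk hkz
    have := hrot (k - x).toNat (by omega)
    rw [if_pos (by omega)] at this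
    convert this.symm using 2 <;> omega
  · intro k hxk hky
    have := hrot ((k - x).toNat + (z - y).toNat) (by omega)
    rw [if_neg (by omega), Nat.add_sub_cancel] at this
    convert this using 2 <;> omega

theorem IsBiInfinitePath.exists_eventually_add_eq_atTop [Finite V] (hG : G.ClosedWalksUnique)
    {f : ℤ → E} (hf : G.IsBiInfinitePath f) : ∃ a > 0, ∀ᶠ k in atTop, f (k + a) = f k := by
  obtain ⟨v, hv⟩ := Finite.exists_infinite_fiber fun k : ℕ => G.s (f k)
  rw [Set.infinite_coe_iff] at hv
  obtain ⟨p, hp, -⟩ := hv.exists_gt 0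
  obtain ⟨q, hq, hpq⟩ := hv.exists_gt p
  refine ⟨q - p, by omega, eventually_atTop.2 ⟨p, fun k hk => ?_⟩⟩
  obtain ⟨r, hr, hkr⟩ := hv.exists_gt (k + (q - p)).toNat
  exact (hf.shift_eq hG (by exact_mod_cast hpq) (show (q : ℤ) < r by omega) hp hq hr).1 k hk
    (by omega)

theorem IsBiInfinitePath.exists_eventually_add_eq_atBot [Finite V] (hG : G.ClosedWalksUnique)
    {f : ℤ → E} (hf : G.IsBiInfinitePath f) : ∃ b > 0, ∀ᶠ k in atBot, f (k + b) = f k := by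
  obtain ⟨v, hv⟩ := Finite.exists_infinite_fiber fun k : ℕ => G.s (f (-k))
  rw [Set.infinite_coe_iff] at hv
  obtain ⟨p, hp, -⟩ := hv.exists_gt 0
  obtain ⟨q, hq, hpq⟩ := hv.exists_gt p
  refine ⟨q - p, by omega, eventually_atBot.2 ⟨-q - 1, fun k hk => ?_⟩⟩
  obtain ⟨r, hr, hkr⟩ := hv.exists_gt (q - k).toNat
  have := (hf.shift_eq hG (show -(r : ℤ) < -q by omega) (by omega) hr hq hp).2 k (by omega)
    (by omega)
  rwa [neg_sub_neg] at this

theorem countable_setOf_isBiInfinitePath [Finite V] [Finite E] (hG : G.ClosedWalksUnique) :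
    {f : ℤ → E | G.IsBiInfinitePath f}.Countable := by
  refine Int.countable_setOf_eventually_add_eq.mono fun f (hf : G.IsBiInfinitePath f) => ?_
  exact ⟨hf.exists_eventually_add_eq_atTop hG, hf.exists_eventually_add_eq_atBot hG⟩

theorem isBiInfinitePath_blockConcat {ι : Type*} {v : V} {ℓ : ℕ} (hℓ : 0 < ℓ) {W : ι → ℕ → E}
    (hW : ∀ x, G.IsClosedWalk v ℓ (W x)) (σ : ℤ → ι) :
    G.IsBiInfinitePath (blockConcat ℓ W σ) := by
  intro k
  obtain ⟨c, i, hi, rfl⟩ : ∃ (c : ℤ) (i : ℕ), i < ℓ ∧ k = ℓ * c + i :=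
    have h₀ := Int.emod_nonneg k (show (ℓ : ℤ) ≠ 0 by omega)
    have h₁ := Int.emod_lt_of_pos k (show (0 : ℤ) < ℓ by omega)
    ⟨k / ℓ, (k % ℓ).toNat, by omega, by rw [Int.toNat_of_nonneg h₀, Int.mul_ediv_add_emod]⟩
  rw [blockConcat_mul_add _ _ _ hi]
  rcases lt_or_eq_of_le (Nat.succ_le_of_lt hi) with h | h
  · rw [add_assoc, ← Nat.cast_succ, blockConcat_mul_add _ _ _ h]
    exact (hW _).2.2 i h
  · rw [show (ℓ * c + i + 1 : ℤ) = ℓ * (c + 1) + (0 : ℕ) by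
        push_cast; linear_combination (by exact_mod_cast h : (i : ℤ) + 1 = ℓ),
      blockConcat_mul_add _ _ _ hℓ, (hW _).1, show i = ℓ - 1 by omega, (hW _).2.1]

theorem not_countable_setOf_isBiInfinitePath {v : V} {ℓ : ℕ} {w₁ w₂ : ℕ → E}
    (h₁ : G.IsClosedWalk v ℓ w₁) (h₂ : G.IsClosedWalk v ℓ w₂) {i : ℕ} (hi : i < ℓ)
    (hne : w₁ i ≠ w₂ i) : ¬ {f : ℤ → E | G.IsBiInfinitePath f}.Countable := by
  set W : Bool → ℕ → E := fun b => cond b w₁ w₂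
  have hW : ∀ x y, (∀ j < ℓ, W x j = W y j) → x = y := by
    intro x y hxy
    cases x <;> cases y <;> first | rfl | exact absurd (hxy i hi) (by simpa [W, eq_comm] using hne)
  have hpath : ∀ σ, G.IsBiInfinitePath (blockConcat ℓ W σ) :=
    isBiInfinitePath_blockConcat (by omega) fun b => by cases b <;> assumption
  have hBool : ¬ Countable (ℤ → Bool) := by
    rw [← Cardinal.mk_le_aleph0_iff, Cardinal.mk_arrow]
    simpa using Cardinal.cantor Cardinal.aleph0
  intro hS
  refine hBool (countable_univ_iff.1 (countable_of_injective_of_countable_image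
    (blockConcat_injective hW).injOn (hS.mono ?_)))
  rintro - ⟨σ, -, rfl⟩
  exact hpath σ

end DirMultigraph

theorem stmt12 {V E : Type*} [Finite V] [Finite E] (G : DirMultigraph V E) :
    ¬ {f : ℤ → E | G.IsBiInfinitePath f}.Countable ↔
      ∃ (v : V) (ℓ : ℕ), 0 < ℓ ∧ ∃ w₁ w₂ : ℕ → E,
        G.IsClosedWalk v ℓ w₁ ∧ G.IsClosedWalk v ℓ w₂ ∧ ∃ i < ℓ, w₁ i ≠ w₂ i := by
  constructor
  · intro hS
    by_contra hpair
    refine hS (DirMultigraph.countable_setOf_isBiInfinitePath fun v ℓ w₁ w₂ h₁ h₂ i hi => ?_)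
    by_contra hne
    exact hpair ⟨v, ℓ, by omega, w₁, w₂, h₁, h₂, i, hi, hne⟩
  · rintro ⟨v, ℓ, -, w₁, w₂, h₁, h₂, i, hi, hne⟩
    exact DirMultigraph.not_countable_setOf_isBiInfinitePath h₁ h₂ hi hne
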